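/- Let S be a zerosumfree left CP-semiring. Then: (1) S is zeroic (for every s ∈ S there exists m ∈ S with s + m = m) and additively π-regular (there exist n ≥ 1 and y ∈ S with n • (1:S) = n • 1 + y + n • 1); (2) there exists an element e ∈ S with e * e = e such that I⁺(S) := {x ∈ S : x + x = x} equals the set Se = {s * e : s ∈ S}; (3) the Bourne congruence modulo I⁺(S) is the universal congruence: for all a, b ∈ S there exist x, y ∈ S with x + x = x, y + y = y, and a + x = b + y. -/

import Mathlib

universe u

/-- A left CP-semiring: every cyclic left `S`-semimodule is projective. -/
def IsLeftCPSemiring (S : Type u) [Semiring S] : Prop :=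
  ∀ (M : Type u) [AddCommMonoid M] [Module S M],
    (∃ m : M, Submodule.span S {m} = ⊤) → Module.Projective S M

/-!
If `ρ` is a left congruence on `S`, projectivity of the cyclic module `S ⧸ ρ` splits the
quotient map, and the splitting has the form `[a] ↦ a * e` for some `e` with `e ρ 1`.
For the least congruence with `a ~ a + a` this `e` is idempotent for both operations,
`1 + v = e` for some `v`, and every additive idempotent `z` satisfies `z * e = z`; this gives
`I⁺(S) = S e` and additive π-regularity. For the Bourne congruence modulo `I⁺(S)` the splitting
element `e₁` satisfies `e * e₁ = 0` because `e ∈ I⁺(S)`, so `e₁ + v * e₁ = 0` and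
zerosumfreeness forces `e₁ = 0`. Hence `0 ~ 1`, so the Bourne congruence is universal, and
`0 ~ s` yields an `m` with `s + m = m`.
-/

lemma nsmul_eq_self_of_add_self {M : Type*} [AddMonoid M] {x : M} (hx : x + x = x) :
    ∀ {n : ℕ}, n ≠ 0 → n • x = x
  | 1, _ => one_nsmul x
  | n + 2, _ => by rw [succ_nsmul, nsmul_eq_self_of_add_self hx n.succ_ne_zero, hx]

section Domination

variable {S M : Type*} [AddCommMonoid M]

def DominatedByMultiple (a b : M) : Prop :=
  ∃ n ≠ 0, ∃ f, a + f = n • b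

namespace DominatedByMultiple

lemma refl (a : M) : DominatedByMultiple a a :=
  ⟨1, one_ne_zero, 0, by rw [add_zero, one_nsmul]⟩

lemma trans {a b d : M} (h₁ : DominatedByMultiple a b) (h₂ : DominatedByMultiple b d) :
    DominatedByMultiple a d := by
  obtain ⟨m, hm, f, hf⟩ := h₁
  obtain ⟨n, hn, g, hg⟩ := h₂
  exact ⟨m * n, mul_ne_zero hm hn, f + m • g, by
    rw [← add_assoc, hf, ← nsmul_add, hg, mul_nsmul']⟩

lemma add {a b a' b' : M} (h : DominatedByMultiple a b) (h' : DominatedByMultiple a' b') :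
    DominatedByMultiple (a + a') (b + b') := by
  obtain ⟨m, hm, f, hf⟩ := h
  obtain ⟨n, -, g, hg⟩ := h'
  refine ⟨m + n, by omega, f + g + n • b + m • b', ?_⟩
  calc a + a' + (f + g + n • b + m • b') = (a + f) + (a' + g) + n • b + m • b' := by abel
    _ = (m + n) • (b + b') := by rw [hf, hg, nsmul_add, add_nsmul, add_nsmul]; abel

lemma smul [Monoid S] [DistribMulAction S M] (t : S) {a b : M} (h : DominatedByMultiple a b) :
    DominatedByMultiple (t • a) (t • b) := by
  obtain ⟨n, hn, f, hf⟩ := h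
  exact ⟨n, hn, t • f, by rw [← smul_add, hf, smul_comm]⟩

lemma add_eq_right {a b : M} (ha : a + a = a) (hb : b + b = b) (h : DominatedByMultiple a b) :
    a + b = b := by
  obtain ⟨n, hn, f, hf⟩ := h
  rw [nsmul_eq_self_of_add_self hb hn] at hf
  rw [← hf, ← add_assoc, ha]

end DominatedByMultiple

variable (S M) in
/-- The least congruence identifying each `a` with `a + a`. -/
def archimedeanCon [Monoid S] [DistribMulAction S M] : ModuleCon S M where
  r a b := DominatedByMultiple a b ∧ DominatedByMultiple b a
  iseqv := ⟨fun a => ⟨.refl a, .refl a⟩, fun h => ⟨h.2, h.1⟩,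
    fun h h' => ⟨h.1.trans h'.1, h'.2.trans h.2⟩⟩
  add' h h' := ⟨h.1.add h'.1, h.2.add h'.2⟩
  smul t _ _ h := ⟨h.1.smul t, h.2.smul t⟩

variable [Monoid S] [DistribMulAction S M]

lemma archimedeanCon_add_self (a : M) : (archimedeanCon S M).r a (a + a) :=
  ⟨⟨1, one_ne_zero, a, by rw [one_nsmul]⟩, ⟨2, two_ne_zero, 0, by rw [add_zero, two_nsmul]⟩⟩

lemma eq_of_archimedeanCon {a b : M} (ha : a + a = a) (hb : b + b = b)
    (h : (archimedeanCon S M).r a b) : a = b := by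
  rw [← h.2.add_eq_right hb ha, add_comm, h.1.add_eq_right ha hb]

end Domination

namespace Submodule

variable (S M : Type*) [Semiring S] [AddCommMonoid M] [Module S M]

def addIdempotents : Submodule S M where
  carrier := {x | x + x = x}
  add_mem' {x y} (hx : x + x = x) (hy : y + y = y) :=
    show x + y + (x + y) = x + y by rw [add_add_add_comm, hx, hy]
  zero_mem' := add_zero 0
  smul_mem' t x (hx : x + x = x) := show t • x + t • x = t • x by rw [← smul_add, hx]

variable {S M}

def bourneCon (I : Submodule S M) : ModuleCon S M where
  r a b := ∃ x ∈ I, ∃ y ∈ I, a + x = b + y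
  iseqv := by
    refine ⟨fun a => ⟨0, I.zero_mem, 0, I.zero_mem, rfl⟩, ?_, ?_⟩
    · rintro a b ⟨x, hx, y, hy, h⟩
      exact ⟨y, hy, x, hx, h.symm⟩
    · rintro a b d ⟨x, hx, y, hy, h⟩ ⟨x', hx', y', hy', h'⟩
      refine ⟨x + x', I.add_mem hx hx', y' + y, I.add_mem hy' hy, ?_⟩
      rw [← add_assoc, h, add_right_comm, h', add_assoc]
  add' := by
    rintro a b a' b' ⟨x, hx, y, hy, h⟩ ⟨x', hx', y', hy', h'⟩
    refine ⟨x + x', I.add_mem hx hx', y + y', I.add_mem hy hy', ?_⟩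
    rw [add_add_add_comm, h, h', add_add_add_comm]
  smul t := by
    rintro a b ⟨x, hx, y, hy, h⟩
    exact ⟨t • x, I.smul_mem t hx, t • y, I.smul_mem t hy, by rw [← smul_add, h, smul_add]⟩

lemma bourneCon_rel_zero_of_mem (I : Submodule S M) {x : M} (hx : x ∈ I) : I.bourneCon.r x 0 :=
  ⟨0, I.zero_mem, x, hx, by rw [add_zero, zero_add]⟩

lemma exists_add_eq_self_of_bourneCon {s : M} (h : (addIdempotents S M).bourneCon.r 0 s) :
    ∃ m : M, s + m = m := by
  obtain ⟨x, hx, y, hy, h⟩ := h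
  rw [zero_add] at h
  have hyx : y + x = x := by rw [h, add_left_comm, hy]
  refine ⟨x, ?_⟩
  calc s + x = s + y + x := by rw [add_assoc, hyx]
    _ = x := by rw [← h, hx]

end Submodule

namespace ModuleCon

variable {S M : Type*} [Semiring S] [AddCommMonoid M] [Module S M]

def mkₗ (c : ModuleCon S M) : M →ₗ[S] c.Quotient where
  toFun := Quotient.mk''
  map_add' _ _ := rfl
  map_smul' _ _ := rfl

lemma mkₗ_surjective (c : ModuleCon S M) : Function.Surjective c.mkₗ :=
  Quotient.mk''_surjective

lemma mkₗ_eq_mkₗ_iff (c : ModuleCon S M) {a b : M} : c.mkₗ a = c.mkₗ b ↔ c.r a b :=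
  Quotient.eq''

lemma span_mkₗ_one (c : ModuleCon S S) : Submodule.span S {c.mkₗ 1} = ⊤ := by
  refine eq_top_iff.2 fun x _ => ?_
  obtain ⟨a, rfl⟩ := c.mkₗ_surjective x
  exact Submodule.mem_span_singleton.2 ⟨a, by rw [← map_smul, smul_eq_mul, mul_one]⟩

lemma rel_of_rel_zero_one (c : ModuleCon S S) (h : c.r 0 1) (a b : S) : c.r a b := by
  have h₀ : ∀ s : S, c.r 0 s := fun s => by simpa using c.smul s h
  exact c.iseqv.trans (c.iseqv.symm (h₀ a)) (h₀ b)

/-- `e` induces the section `[a] ↦ a * e` of the quotient map `S → S ⧸ c`. -/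
structure IsSplitting (c : ModuleCon S S) (e : S) : Prop where
  rel_one : c.r e 1
  mul_eq_mul : ∀ {a b}, c.r a b → a * e = b * e

theorem exists_isSplitting (c : ModuleCon S S) [Module.Projective S c.Quotient] :
    ∃ e, c.IsSplitting e := by
  obtain ⟨g, hg⟩ := c.mkₗ.exists_rightInverse_of_surjective
    (LinearMap.range_eq_top.2 c.mkₗ_surjective)
  have hg_mk : ∀ a, g (c.mkₗ a) = a * g (c.mkₗ 1) := fun a => by
    rw [← smul_eq_mul, ← map_smul, ← map_smul, smul_eq_mul, mul_one]
  refine ⟨g (c.mkₗ 1), (c.mkₗ_eq_mkₗ_iff).1 (LinearMap.congr_fun hg _), fun h => ?_⟩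
  rw [← hg_mk, ← hg_mk, (c.mkₗ_eq_mkₗ_iff).2 h]

namespace IsSplitting

variable {c : ModuleCon S S} {e : S}

lemma mul_self (h : c.IsSplitting e) : e * e = e := by
  simpa using h.mul_eq_mul h.rel_one

lemma rel_mul (h : c.IsSplitting e) (a : S) : c.r (a * e) a := by
  simpa using c.smul a h.rel_one

end IsSplitting

end ModuleCon

lemma IsLeftCPSemiring.exists_isSplitting {S : Type u} [Semiring S] (hS : IsLeftCPSemiring S)
    (c : ModuleCon S S) : ∃ e, c.IsSplitting e :=
  have := hS c.Quotient ⟨_, c.span_mkₗ_one⟩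
  c.exists_isSplitting

namespace ModuleCon.IsSplitting

variable {S : Type*} [Semiring S] {e : S} (he : (archimedeanCon S S).IsSplitting e)
include he

lemma add_self : e + e = e := by
  simpa [add_mul] using (he.mul_eq_mul (archimedeanCon_add_self (1 : S))).symm

lemma exists_one_add_eq : ∃ v, 1 + v = e := by
  obtain ⟨n, hn, v, hv⟩ := he.rel_one.2
  exact ⟨v, by rw [hv, nsmul_eq_self_of_add_self he.add_self hn]⟩

lemma exists_nsmul_one_eq :
    ∃ n : ℕ, 1 ≤ n ∧ ∃ y : S, n • (1 : S) = n • (1 : S) + y + n • (1 : S) := by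
  obtain ⟨n, hn, u, hu⟩ := he.rel_one.1
  obtain ⟨v, hv⟩ := he.exists_one_add_eq
  refine ⟨n, Nat.one_le_iff_ne_zero.2 hn, n • v, ?_⟩
  rw [← nsmul_add, hv, nsmul_eq_self_of_add_self he.add_self hn, ← hu, ← add_assoc, he.add_self]

lemma setOf_add_self_eq : {x : S | x + x = x} = {x : S | ∃ s : S, x = s * e} := by
  ext x
  refine ⟨fun hx => ⟨x, ?_⟩, ?_⟩
  · have hxe : x * e + x * e = x * e := by rw [← mul_add, he.add_self]
    exact (eq_of_archimedeanCon hxe hx (he.rel_mul x)).symm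
  · rintro ⟨s, rfl⟩
    exact show s * e + s * e = s * e by rw [← mul_add, he.add_self]

lemma eq_zero_of_isSplitting_bourneCon (hzsf : ∀ a b : S, a + b = 0 → a = 0 ∧ b = 0) {e₁ : S}
    (he₁ : (Submodule.addIdempotents S S).bourneCon.IsSplitting e₁) : e₁ = 0 := by
  obtain ⟨v, hv⟩ := he.exists_one_add_eq
  have hee₁ : e * e₁ = 0 := by
    simpa using he₁.mul_eq_mul (Submodule.bourneCon_rel_zero_of_mem _ (he.add_self : e + e = e))
  exact (hzsf e₁ (v * e₁) (by rw [← one_add_mul, hv, hee₁])).1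

end ModuleCon.IsSplitting

/-- a zerosumfree left CP-semiring `S` is (1) zeroic and additively
π-regular; (2) its set of additively idempotent elements `I⁺(S)` equals `Se` for
some multiplicative idempotent `e`; (3) the Bourne congruence modulo `I⁺(S)` is
universal. -/
theorem zerosumfree_leftCPSemiring_structure
    {S : Type u} [Semiring S]
    (hzsf : ∀ a b : S, a + b = 0 → a = 0 ∧ b = 0)
    (hS : IsLeftCPSemiring S) :
    ((∀ s : S, ∃ m : S, s + m = m) ∧
      (∃ n : ℕ, 1 ≤ n ∧ ∃ y : S, n • (1 : S) = n • (1 : S) + y + n • (1 : S))) ∧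
    (∃ e : S, e * e = e ∧ {x : S | x + x = x} = {x : S | ∃ s : S, x = s * e}) ∧
    (∀ a b : S, ∃ x y : S, x + x = x ∧ y + y = y ∧ a + x = b + y) := by
  obtain ⟨e, he⟩ := hS.exists_isSplitting (archimedeanCon S S)
  obtain ⟨e₁, he₁⟩ := hS.exists_isSplitting (Submodule.addIdempotents S S).bourneCon
  have huniv : ∀ a b : S, (Submodule.addIdempotents S S).bourneCon.r a b := by
    refine ModuleCon.rel_of_rel_zero_one _ ?_
    simpa [he.eq_zero_of_isSplitting_bourneCon hzsf he₁] using he₁.rel_one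
  refine ⟨⟨fun s => Submodule.exists_add_eq_self_of_bourneCon (huniv 0 s),
    he.exists_nsmul_one_eq⟩, ⟨e, he.mul_self, he.setOf_add_self_eq⟩, fun a b => ?_⟩
  obtain ⟨x, hx, y, hy, h⟩ := huniv a b
  exact ⟨x, y, hx, hy, h⟩
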